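/- For every open J ⊆ ℝ and settling names ρ, σ, τ: if J ⊩₃ ρ = σ and J ⊩₃ σ = τ, then J ⊩₃ ρ = τ. -/

import Mathlib

/-- Settling names over ℝ: a family of pairs of a settling name and an open set of
reals, together with a family of pairs of a settling name and a real. -/
inductive SName : Type 1
  | mk (ι : Type) (elem : ι → SName) (cond : ι → Set ℝ) (hopen : ∀ i, IsOpen (cond i))
       (κ : Type) (relem : κ → SName) (rcond : κ → ℝ) : SName

namespace SName

/-- Index type of the open-set pairs. -/
def idx : SName → Type
  | mk ι _ _ _ _ _ _ => ι

/-- Name component of an open-set pair. -/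
def elem : (σ : SName) → σ.idx → SName
  | mk _ e _ _ _ _ _ => e

/-- Open-set component of an open-set pair. -/
def cond : (σ : SName) → σ.idx → Set ℝ
  | mk _ _ c _ _ _ _ => c

theorem cond_isOpen : ∀ (σ : SName) (i : σ.idx), IsOpen (σ.cond i)
  | mk _ _ _ h _ _ _ => h

/-- Index type of the real pairs. -/
def ridx : SName → Type
  | mk _ _ _ _ κ _ _ => κ

/-- Name component of a real pair. -/
def relem : (σ : SName) → σ.ridx → SName
  | mk _ _ _ _ _ re _ => re

/-- Real component of a real pair. -/
def rcond : (σ : SName) → σ.ridx → ℝ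
  | mk _ _ _ _ _ _ rc => rc

/-- Hereditary extensional equality of settling names. -/
def equiv : SName → SName → Prop
  | mk _ e c _ _ re rc, mk _ e' c' _ _ re' rc' =>
    ((∀ i, ∃ i', equiv (e i) (e' i') ∧ c i = c' i') ∧
     (∀ i', ∃ i, equiv (e i) (e' i') ∧ c i = c' i')) ∧
    ((∀ h, ∃ h', equiv (re h) (re' h') ∧ rc h = rc' h') ∧
     (∀ h', ∃ h, equiv (re h) (re' h') ∧ rc h = rc' h'))

/-- The settling σ^r of a settling name σ at a real r. -/
def settle : SName → ℝ → SName
  | mk ι e c _ κ re rc, r =>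
    mk ({i : ι // r ∈ c i} ⊕ {h : κ // rc h = r})
      (Sum.elim (fun i => settle (e i.1) r) (fun h => settle (re h.1) r))
      (fun _ => Set.univ) (fun _ => isOpen_univ)
      Empty (fun h => h.elim) (fun h => h.elim)

/-- Rank of a settling name (over the open-set pairs), used for the recursive
definition of settling forcing. -/
noncomputable def rank : SName → Ordinal.{0}
  | mk _ e _ _ _ _ _ => Ordinal.lsub fun i => rank (e i)

theorem rank_elem_lt : ∀ (σ : SName) (i : σ.idx), (σ.elem i).rank < σ.rank
  | mk ι e c h κ re rc, i => by
    simpa [rank, elem] using Ordinal.lt_lsub (fun i => rank (e i)) i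

/-- Ported: Mathlib's natural (Hessenberg) sum `♯` is gone; the termination measure is
the lexicographic pair (max, min) of the two ranks instead. -/
theorem lex_maxmin_lt {a a' b : Ordinal.{0}} (h : a' < a) :
    Prod.Lex (· < ·) (· < ·) (max a' b, min a' b) (max a b, min a b) := by
  rcases le_total a b with hab | hab
  · have : a' ≤ b := le_trans h.le hab
    rw [max_eq_right this, max_eq_right hab, min_eq_left this, min_eq_left hab]
    exact Prod.Lex.right _ h
  · rcases lt_or_ge (max a' b) a with h2 | h2
    · rw [max_eq_left hab]
      exact Prod.Lex.left _ _ h2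
    · have : a ≤ b := by
        rcases le_total a' b with h3 | h3
        · rwa [max_eq_right h3] at h2
        · rw [max_eq_left h3] at h2; exact absurd h (not_lt.mpr h2)
      have hb : a = b := le_antisymm this hab
      subst hb
      rw [max_eq_right h.le, min_eq_left h.le, max_self, min_self]
      exact Prod.Lex.right _ h

mutual
  /-- `seq σ τ J` means `J ⊩₃ σ = τ`. -/
  def seq (σ τ : SName) (J : Set ℝ) : Prop :=
    (∀ i : σ.idx, smem (σ.elem i) τ (J ∩ σ.cond i)) ∧
    (∀ j : τ.idx, smem (τ.elem j) σ (J ∩ τ.cond j)) ∧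
    (∀ r ∈ J, equiv (σ.settle r) (τ.settle r))
  termination_by (max σ.rank τ.rank, min σ.rank τ.rank)
  decreasing_by
    · exact lex_maxmin_lt (rank_elem_lt σ i)
    · rw [max_comm σ.rank, min_comm σ.rank]
      exact lex_maxmin_lt (rank_elem_lt τ j)

  /-- `smem σ τ J` means `J ⊩₃ σ ∈ τ`. -/
  def smem (σ τ : SName) (J : Set ℝ) : Prop :=
    (∀ r ∈ J, ∃ (j : τ.idx) (J' : Set ℝ), IsOpen J' ∧ J' ⊆ J ∧ r ∈ J' ∩ τ.cond j ∧
      seq σ (τ.elem j) (J' ∩ τ.cond j)) ∧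
    (∀ r ∈ J, ∃ k : (τ.settle r).idx,
      (τ.settle r).cond k = Set.univ ∧ equiv ((τ.settle r).elem k) (σ.settle r))
  termination_by (max σ.rank τ.rank, min σ.rank τ.rank)
  decreasing_by
    rw [max_comm σ.rank, min_comm σ.rank, max_comm σ.rank, min_comm σ.rank]
    exact lex_maxmin_lt (rank_elem_lt τ j)
end

end SName

/-!
Both forcing relations are transported along forced equality simultaneously, by well-founded
recursion on the pair of ranks that defines them. To move `x ∈ σ` across `σ = τ`, a witness
`x = σᵢ` on `J'` is combined with a witness `σᵢ = τⱼ` on `J''`; on `J' ∩ J'' ∩ Jⱼ` both hold,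
and the recursive call chains them to `x = τⱼ`. The settled parts only need transitivity of `≡`.
-/

namespace SName

theorem equiv.symm : ∀ {σ τ : SName}, equiv σ τ → equiv τ σ
  | .mk .., .mk .., ⟨⟨h₁, h₂⟩, h₃, h₄⟩ =>
    ⟨⟨fun i' => (h₂ i').imp fun _ ⟨he, hc⟩ => ⟨he.symm, hc.symm⟩,
      fun i => (h₁ i).imp fun _ ⟨he, hc⟩ => ⟨he.symm, hc.symm⟩⟩,
     fun h' => (h₄ h').imp fun _ ⟨he, hc⟩ => ⟨he.symm, hc.symm⟩,
     fun h => (h₃ h).imp fun _ ⟨he, hc⟩ => ⟨he.symm, hc.symm⟩⟩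

theorem equiv.trans : ∀ {ρ σ τ : SName}, equiv ρ σ → equiv σ τ → equiv ρ τ
  | .mk .., .mk .., .mk .., ⟨⟨h₁, h₂⟩, h₃, h₄⟩, ⟨⟨g₁, g₂⟩, g₃, g₄⟩ =>
    ⟨⟨fun i => by
        obtain ⟨i', he, hc⟩ := h₁ i
        obtain ⟨i'', ge, gc⟩ := g₁ i'
        exact ⟨i'', he.trans ge, hc.trans gc⟩,
      fun i'' => by
        obtain ⟨i', ge, gc⟩ := g₂ i''
        obtain ⟨i, he, hc⟩ := h₂ i'
        exact ⟨i, he.trans ge, hc.trans gc⟩⟩,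
     fun h => by
        obtain ⟨h', he, hc⟩ := h₃ h
        obtain ⟨h'', ge, gc⟩ := g₃ h'
        exact ⟨h'', he.trans ge, hc.trans gc⟩,
     fun h'' => by
        obtain ⟨h', ge, gc⟩ := g₄ h''
        obtain ⟨h, he, hc⟩ := h₄ h'
        exact ⟨h, he.trans ge, hc.trans gc⟩⟩

theorem equiv.exists_elem : ∀ {σ τ : SName}, equiv σ τ →
    ∀ i : σ.idx, ∃ j : τ.idx, equiv (σ.elem i) (τ.elem j) ∧ σ.cond i = τ.cond j
  | .mk .., .mk .., h => h.1.1

theorem seq.symm {σ τ : SName} {J : Set ℝ} (h : seq σ τ J) : seq τ σ J := by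
  rw [seq] at h ⊢
  exact ⟨h.2.1, h.1, fun r hr => (h.2.2 r hr).symm⟩

mutual
  theorem seq.mono {σ τ : SName} {J K : Set ℝ} (h : seq σ τ J) (hK : IsOpen K) (hKJ : K ⊆ J) :
      seq σ τ K := by
    rw [seq] at h ⊢
    obtain ⟨hσ, hτ, hsettle⟩ := h
    exact ⟨fun i => (hσ i).mono (hK.inter (σ.cond_isOpen i)) (Set.inter_subset_inter_left _ hKJ),
      fun j => (hτ j).mono (hK.inter (τ.cond_isOpen j)) (Set.inter_subset_inter_left _ hKJ),
      fun r hr => hsettle r (hKJ hr)⟩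
  termination_by (max σ.rank τ.rank, min σ.rank τ.rank)
  decreasing_by
    · exact lex_maxmin_lt (rank_elem_lt σ i)
    · rw [max_comm σ.rank, min_comm σ.rank]
      exact lex_maxmin_lt (rank_elem_lt τ j)

  theorem smem.mono {σ τ : SName} {J K : Set ℝ} (h : smem σ τ J) (hK : IsOpen K) (hKJ : K ⊆ J) :
      smem σ τ K := by
    rw [smem] at h ⊢
    obtain ⟨hwit, hsettle⟩ := h
    refine ⟨fun r hr => ?_, fun r hr => hsettle r (hKJ hr)⟩
    obtain ⟨j, J', hJ', -, ⟨hrJ', hrj⟩, hseq⟩ := hwit r (hKJ hr)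
    exact ⟨j, J' ∩ K, hJ'.inter hK, Set.inter_subset_right, ⟨⟨hrJ', hr⟩, hrj⟩,
      hseq.mono ((hJ'.inter hK).inter (τ.cond_isOpen j))
        (Set.inter_subset_inter_left _ Set.inter_subset_left)⟩
  termination_by (max σ.rank τ.rank, min σ.rank τ.rank)
  decreasing_by
    rw [max_comm σ.rank, min_comm σ.rank, max_comm σ.rank, min_comm σ.rank]
    exact lex_maxmin_lt (rank_elem_lt τ j)
end

mutual
  theorem seq.trans {ρ σ τ : SName} {J : Set ℝ} (h₁ : seq ρ σ J) (h₂ : seq σ τ J) :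
      seq ρ τ J := by
    obtain ⟨hρ, -, hsettle₁⟩ := (seq.eq_1 ..).mp h₁
    obtain ⟨-, hτ, hsettle₂⟩ := (seq.eq_1 ..).mp h₂
    rw [seq]
    exact ⟨fun i => (hρ i).congr_right h₂ Set.inter_subset_left,
      fun j => (hτ j).congr_right h₁.symm Set.inter_subset_left,
      fun r hr => (hsettle₁ r hr).trans (hsettle₂ r hr)⟩
  termination_by (max ρ.rank τ.rank, min ρ.rank τ.rank)
  decreasing_by
    · exact lex_maxmin_lt (rank_elem_lt ρ i)
    · rw [max_comm ρ.rank, min_comm ρ.rank]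
      exact lex_maxmin_lt (rank_elem_lt τ j)

  -- `K ⊆ J` rather than `K = J`: the sets `J ∩ Jᵢ` met in `seq.trans` need not be open,
  -- so `h₂` cannot be restricted to them by `seq.mono`.
  theorem smem.congr_right {x σ τ : SName} {J K : Set ℝ} (h₁ : smem x σ K) (h₂ : seq σ τ J)
      (hKJ : K ⊆ J) : smem x τ K := by
    obtain ⟨hσ, -, hsettleστ⟩ := (seq.eq_1 ..).mp h₂
    rw [smem] at h₁ ⊢
    obtain ⟨hwit, hsettle⟩ := h₁
    refine ⟨fun r hr => ?_, fun r hr => ?_⟩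
    · obtain ⟨i, J', hJ', hJ'K, ⟨hrJ', hri⟩, hxσi⟩ := hwit r hr
      obtain ⟨j, J'', hJ'', hJ''sub, ⟨hrJ'', hrj⟩, hσiτj⟩ :=
        ((smem.eq_1 ..).mp (hσ i)).1 r ⟨hKJ hr, hri⟩
      have hopen : IsOpen (J' ∩ J'' ∩ τ.cond j) := (hJ'.inter hJ'').inter (τ.cond_isOpen j)
      have hxσi' := hxσi.mono hopen fun y hy => ⟨hy.1.1, (hJ''sub hy.1.2).2⟩
      have hσiτj' := hσiτj.mono hopen (Set.inter_subset_inter_left _ Set.inter_subset_right)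
      exact ⟨j, J' ∩ J'', hJ'.inter hJ'', Set.inter_subset_left.trans hJ'K,
        ⟨⟨hrJ', hrJ''⟩, hrj⟩, hxσi'.trans hσiτj'⟩
    · obtain ⟨k, hk_univ, hk⟩ := hsettle r hr
      obtain ⟨k', hkk', hcond⟩ := (hsettleστ r (hKJ hr)).exists_elem k
      exact ⟨k', hcond ▸ hk_univ, hkk'.symm.trans hk⟩
  termination_by (max x.rank τ.rank, min x.rank τ.rank)
  decreasing_by
    rw [max_comm x.rank, min_comm x.rank, max_comm x.rank, min_comm x.rank]
    exact lex_maxmin_lt (rank_elem_lt τ j)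
end

end SName

theorem sforces_eq_trans (J : Set ℝ) (hJ : IsOpen J) (ρ σ τ : SName)
    (h₁ : SName.seq ρ σ J) (h₂ : SName.seq σ τ J) : SName.seq ρ τ J :=
  h₁.trans h₂
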